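/- arXiv:1705.09799 — 2 statements merged into one kernel-verified Lean document; each statement's English description precedes it below -/
import Mathlib

section
/- Let A ⊆ B be integral domains, R = A + XB[X], S = (U(B) ∩ A) ∪ {uX^n : u ∈ U(B), n ≥ 1}, S_0 = U(B) ∩ A, and K the quotient field of A. Then S splits R (R viewed as an R-module, S splitting the subset E = R) if and only if the following three conditions all hold: (1) S_0 splits A (A viewed as an A-module); (2) for every b ∈ B there are u ∈ U(B) and a ∈ A with b = u·a; (3) U(B) ∩ K ⊆ A_{S_0}, the localization of A at S_0. In particular, if B is a field, or if S_0 is any A-splitting saturated multiplicatively closed subset of A and B = A_{S_0}, then S splits R. -/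
namespace FactorizationPaper

variable {R : Type*} [CommRing R]

/-- `S` is a saturated multiplicatively closed subset of `R`:
it contains `1`, is closed under multiplication, and `x*y ∈ S` implies `x ∈ S` and `y ∈ S`. -/
def Saturated (S : Set R) : Prop :=
  1 ∈ S ∧ (∀ x ∈ S, ∀ y ∈ S, x * y ∈ S) ∧ ∀ x y : R, x * y ∈ S → x ∈ S ∧ y ∈ S

/-- The submonoid of `R` associated to a saturated multiplicatively closed set. -/
def Saturated.submonoid {S : Set R} (hS : Saturated S) : Submonoid R where
  carrier := S
  one_mem' := hS.1
  mul_mem' := fun {a b} ha hb => hS.2.1 a ha b hb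

section ElementDefs

variable (S : Set R) {N : Type*} [AddCommGroup N] [Module R N]

/-- `m ∼^S n` : `m` and `n` are S-associates. -/
def SAssoc (m n : N) : Prop := (∃ s ∈ S, m = s • n) ∧ (∃ s ∈ S, n = s • m)

/-- `m ≈^S n` : `m` and `n` are S-strong associates. -/
def SStrongAssoc (m n : N) : Prop := ∃ u : R, IsUnit u ∧ u ∈ S ∧ m = u • n

/-- `m ≅^S n` : `m` and `n` are S-very strong associates. -/
def SVeryStrongAssoc (m n : N) : Prop :=
  SAssoc S m n ∧ ((m = 0 ∧ n = 0) ∨ ∀ s ∈ S, m = s • n → IsUnit s)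

/-- `m` is S-primitive. -/
def SPrimitive (m : N) : Prop := ∀ s ∈ S, ∀ n : N, m = s • n → SAssoc S n m

/-- `m` is S-strongly primitive. -/
def SStronglyPrimitive (m : N) : Prop := ∀ s ∈ S, ∀ n : N, m = s • n → SStrongAssoc S n m

/-- `m` is S-very strongly primitive. -/
def SVeryStronglyPrimitive (m : N) : Prop := ∀ s ∈ S, ∀ n : N, m = s • n → SVeryStrongAssoc S n m

/-- the three kinds of S-primitivity, indexed by `Fin 3` :
`0` = primitive, `1` = strongly primitive, `2` = very strongly primitive. -/
def PrimOf (k : Fin 3) (m : N) : Prop :=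
  match k with
  | 0 => SPrimitive S m
  | 1 => SStronglyPrimitive S m
  | 2 => SVeryStronglyPrimitive S m

/-- `m = s • n` is a compact S-atomic factorization of `m`. -/
def IsCompactFactorization (m : N) (s : R) (n : N) : Prop :=
  s ∈ S ∧ SPrimitive S n ∧ m = s • n

/-- `m = s₁ ⋯ s_k • n` (with the `sᵢ` the members of the list `l`, nonunits in `S`)
is an S-factorization of `m`, of length `l.length`. -/
def IsSFactorization (m : N) (l : List R) (n : N) : Prop :=
  (∀ s ∈ l, s ∈ S ∧ ¬ IsUnit s) ∧ m = l.prod • n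

end ElementDefs

/-- `a ∼ b` : associates in `R` (i.e. S-associates with `S = R`, in `R` as an `R`-module). -/
def Assoc (a b : R) : Prop := SAssoc (Set.univ : Set R) a b

/-- `a ≈ b` : strong associates in `R`. -/
def StrongAssoc (a b : R) : Prop := SStrongAssoc (Set.univ : Set R) a b

/-- `a ≅ b` : very strong associates in `R`. -/
def VeryStrongAssoc (a b : R) : Prop := SVeryStrongAssoc (Set.univ : Set R) a b

/-- `a` is irreducible. -/
def Irred (a : R) : Prop := ¬ IsUnit a ∧ ∀ b c : R, a = b * c → Assoc a b ∨ Assoc a c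

/-- `a` is strongly irreducible. -/
def StrongIrred (a : R) : Prop :=
  ¬ IsUnit a ∧ ∀ b c : R, a = b * c → StrongAssoc a b ∨ StrongAssoc a c

/-- `a` is very strongly irreducible. -/
def VeryStrongIrred (a : R) : Prop :=
  ¬ IsUnit a ∧ ∀ b c : R, a = b * c → VeryStrongAssoc a b ∨ VeryStrongAssoc a c

/-- the three kinds of irreducibility, indexed by `Fin 3` :
`0` = irreducible, `1` = strongly irreducible, `2` = very strongly irreducible. -/
def IrredOf (k : Fin 3) (a : R) : Prop :=
  match k with
  | 0 => Irred a
  | 1 => StrongIrred a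
  | 2 => VeryStrongIrred a

section ElementDefs2

variable (S : Set R) {N : Type*} [AddCommGroup N] [Module R N]

/-- `m = s₁ ⋯ s_k • n` is an S-atomic factorization
(each `sᵢ` irreducible and in `S`, `n` S-primitive). -/
def IsSAtomicFactorization (m : N) (l : List R) (n : N) : Prop :=
  IsSFactorization S m l n ∧ (∀ s ∈ l, Irred s) ∧ SPrimitive S n

/-- an (α, β)-S-factorization: each `sᵢ` is α (a kind of irreducible)
and `n` is S-β (a kind of S-primitive). -/
def IsABFactorization (kα kβ : Fin 3) (m : N) (l : List R) (n : N) : Prop :=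
  IsSFactorization S m l n ∧ (∀ s ∈ l, IrredOf kα s) ∧ PrimOf S kβ n

/-- Isomorphism of S-atomic factorizations: same length, S-associate primitive parts,
and the irreducible parts match up to permutation and associates. -/
def FactorIso (l : List R) (n : N) (l' : List R) (n' : N) : Prop :=
  l.length = l'.length ∧ SAssoc S n n' ∧
    ∃ l'' : List R, l'.Perm l'' ∧ List.Forall₂ Assoc l l''

end ElementDefs2

section SetDefs

variable (S : Set R) {N : Type*} [AddCommGroup N] [Module R N]

/-- `E ⊆ N` is compactly S-atomic. -/
def CompactlySAtomic (E : Set N) : Prop :=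
  ∀ m ∈ E, m ≠ 0 → ∃ s n, IsCompactFactorization S m s n

/-- `E ⊆ N` is semi-S-factorable. -/
def SemiSFactorable (E : Set N) : Prop :=
  CompactlySAtomic S E ∧ ∀ m ∈ E, m ≠ 0 → ∀ s n s' n',
    IsCompactFactorization S m s n → IsCompactFactorization S m s' n' → Assoc s s'

/-- `E ⊆ N` is S-factorable. -/
def SFactorable (E : Set N) : Prop :=
  SemiSFactorable S E ∧ ∀ m ∈ E, m ≠ 0 → ∀ s n s' n',
    IsCompactFactorization S m s n → IsCompactFactorization S m s' n' → SAssoc S n n'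

/-- `S` splits `E ⊆ N`. -/
def Splits (E : Set N) : Prop :=
  SemiSFactorable S E ∧
    ∀ r : R, SPrimitive S r → ∀ m : N, SPrimitive S m →
      r • m ≠ 0 → r • m ∈ E → SPrimitive S (r • m)

end SetDefs

/-- The set of zero divisors of the module `M` in `R`. -/
def ZDiv (R : Type*) [CommRing R] (M : Type*) [AddCommGroup M] [Module R M] : Set R :=
  {r : R | ∃ m : M, m ≠ 0 ∧ r • m = 0}

/-- The annihilator of `M` in `R`, as a set. -/
def AnnSet (R : Type*) [CommRing R] (M : Type*) [AddCommGroup M] [Module R M] : Set R :=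
  {r : R | ∀ m : M, r • m = 0}

/-- The annihilator of `M` in `R`, as an ideal. -/
def AnnIdeal (R : Type*) [CommRing R] (M : Type*) [AddCommGroup M] [Module R M] : Ideal R where
  carrier := AnnSet R M
  zero_mem' := fun m => zero_smul R m
  add_mem' := fun {a b} ha hb m => by
    rw [add_smul, ha m, hb m, add_zero]
  smul_mem' := fun c x hx m => by
    rw [smul_eq_mul, mul_smul, hx m, smul_zero]

section ModuleProps

variable (S : Set R) (N : Type*) [AddCommGroup N] [Module R N]

/-- `N` is S-présimplifiable. -/
def SPresimplifiable : Prop := ∀ s ∈ S, ∀ m : N, s • m = m → IsUnit s ∨ m = 0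

/-- `N` is S-atomic. -/
def SAtomicModule : Prop := ∀ m : N, m ≠ 0 → ∃ l n, IsSAtomicFactorization S m l n

/-- `N` is (α, β)-S-atomic. -/
def ABAtomicModule (kα kβ : Fin 3) : Prop :=
  ∀ m : N, m ≠ 0 → ∃ l n, IsABFactorization S kα kβ m l n

/-- `N` is an S-UFM. -/
def SUFM : Prop := SAtomicModule S N ∧ ∀ m : N, m ≠ 0 → ∀ l n l' n',
  IsSAtomicFactorization S m l n → IsSAtomicFactorization S m l' n' → FactorIso S l n l' n'

/-- `N` is an S-FFM. -/
def SFFM : Prop := SAtomicModule S N ∧ ∀ m : N, m ≠ 0 →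
  ∃ Fs : Set (List R × N), Fs.Finite ∧
    ∀ l n, IsSAtomicFactorization S m l n → ∃ p ∈ Fs, FactorIso S l n p.1 p.2

/-- `N` is an S-BFM. -/
def SBFM : Prop := ∀ m : N, m ≠ 0 → ∃ B : ℕ,
  ∀ l n, IsSFactorization S m l n → l.length ≤ B

/-- `N` is an S-HFM. -/
def SHFM : Prop := SAtomicModule S N ∧ ∀ m : N, m ≠ 0 → ∀ l n l' n',
  IsSAtomicFactorization S m l n → IsSAtomicFactorization S m l' n' → l.length = l'.length

end ModuleProps

section InE

variable (E : Set R)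

/-- `R` is présimplifiable in `E`. -/
def PresimpIn : Prop := ∀ a ∈ E, a ≠ 0 → ¬ IsUnit a → ∀ r : R, a = r * a → IsUnit r ∨ a = 0

/-- `R` is atomic in `E`. -/
def AtomicIn : Prop := ∀ a ∈ E, a ≠ 0 → ¬ IsUnit a →
  ∃ l n, IsSAtomicFactorization (Set.univ : Set R) a l n

/-- `R` has unique factorization in `E`. -/
def UFIn : Prop := AtomicIn E ∧ ∀ a ∈ E, a ≠ 0 → ¬ IsUnit a → ∀ l n l' n',
  IsSAtomicFactorization (Set.univ : Set R) a l n →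
  IsSAtomicFactorization (Set.univ : Set R) a l' n' →
  FactorIso (Set.univ : Set R) l n l' n'

/-- `R` has finite factorization in `E`. -/
def FFIn : Prop := AtomicIn E ∧ ∀ a ∈ E, a ≠ 0 → ¬ IsUnit a →
  ∃ Fs : Set (List R × R), Fs.Finite ∧ ∀ l n,
    IsSAtomicFactorization (Set.univ : Set R) a l n →
      ∃ p ∈ Fs, FactorIso (Set.univ : Set R) l n p.1 p.2

/-- `R` is half factorial in `E`. -/
def HFIn : Prop := AtomicIn E ∧ ∀ a ∈ E, a ≠ 0 → ¬ IsUnit a → ∀ l n l' n',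
  IsSAtomicFactorization (Set.univ : Set R) a l n →
  IsSAtomicFactorization (Set.univ : Set R) a l' n' → l.length = l'.length

/-- `R` has bounded factorization in `E`. -/
def BFIn : Prop := ∀ a ∈ E, a ≠ 0 → ¬ IsUnit a →
  ∃ B : ℕ, ∀ l n, IsSFactorization (Set.univ : Set R) a l n → l.length ≤ B

end InE

/-- The set `T = S⁻¹S'` in the localization `R_S`. -/
def locT {S : Set R} (hS : Saturated S) (S' : Set R) : Set (Localization hS.submonoid) :=
  {x | ∃ s' ∈ S', ∃ t : hS.submonoid, x = Localization.mk s' t}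

section DomainDefs

variable (D : Type*) [CommRing D]

/-- two lists of ring elements agree up to order and associates. -/
def ListAssociated (l l' : List D) : Prop :=
  ∃ l'' : List D, l'.Perm l'' ∧ List.Forall₂ Associated l l''

/-- `D` is atomic: every nonzero nonunit is a finite product of irreducibles. -/
def DomAtomic : Prop := ∀ x : D, x ≠ 0 → ¬ IsUnit x →
  ∃ l : List D, (∀ a ∈ l, Irreducible a) ∧ x = l.prod

/-- `D` is a bounded factorization domain. -/
def DomBFD : Prop := ∀ x : D, x ≠ 0 → ¬ IsUnit x →
  ∃ B : ℕ, ∀ l : List D, (∀ a ∈ l, ¬ IsUnit a) → x = l.prod → l.length ≤ B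

/-- `D` is a half factorial domain. -/
def DomHFD : Prop := DomAtomic D ∧ ∀ x : D, x ≠ 0 → ¬ IsUnit x →
  ∀ l l' : List D, (∀ a ∈ l, Irreducible a) → x = l.prod →
    (∀ a ∈ l', Irreducible a) → x = l'.prod → l.length = l'.length

/-- `D` is a finite factorization domain. -/
def DomFFD : Prop := DomAtomic D ∧ ∀ x : D, x ≠ 0 → ¬ IsUnit x →
  ∃ Fs : Set (List D), Fs.Finite ∧ ∀ l : List D, (∀ a ∈ l, Irreducible a) → x = l.prod →
    ∃ l' ∈ Fs, ListAssociated D l l'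

/-- `D` is a unique factorization domain. -/
def DomUFD : Prop := DomAtomic D ∧ ∀ x : D, x ≠ 0 → ¬ IsUnit x →
  ∀ l l' : List D, (∀ a ∈ l, Irreducible a) → x = l.prod →
    (∀ a ∈ l', Irreducible a) → x = l'.prod → ListAssociated D l l'

end DomainDefs

section AXBXdefs

variable (B : Type*) [CommRing B] (A : Subring B)

/-- The ring `R = A + X·B[X]`, as a subring of `B[X]`. -/
def AXBX : Subring (Polynomial B) where
  carrier := {f | f.coeff 0 ∈ A}
  zero_mem' := by simp only [Set.mem_setOf_eq, Polynomial.coeff_zero]; exact zero_mem A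
  one_mem' := by
    simp only [Set.mem_setOf_eq, Polynomial.coeff_one, if_pos rfl]
    exact one_mem A
  add_mem' := fun {f g} hf hg => by
    simp only [Set.mem_setOf_eq, Polynomial.coeff_add] at *
    exact add_mem hf hg
  neg_mem' := fun {f} hf => by
    simp only [Set.mem_setOf_eq, Polynomial.coeff_neg] at *
    exact neg_mem hf
  mul_mem' := fun {f g} hf hg => by
    simp only [Set.mem_setOf_eq, Polynomial.mul_coeff_zero] at *
    exact mul_mem hf hg

/-- The saturated multiplicatively closed subset `S = (U(B) ∩ A) ∪ {u·Xⁿ : u ∈ U(B), n ≥ 1}`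
of `R = A + X·B[X]`. -/
def Sset : Set (AXBX B A) :=
  {f | (∃ u : B, IsUnit u ∧ u ∈ A ∧ (f : Polynomial B) = Polynomial.C u) ∨
       (∃ u : B, IsUnit u ∧ ∃ n : ℕ, 1 ≤ n ∧
          (f : Polynomial B) = Polynomial.C u * Polynomial.X ^ n)}

/-- The saturated multiplicatively closed subset `S₀ = U(B) ∩ A` of `A`. -/
def S0set : Set A := {a : A | IsUnit (a : B)}

end AXBXdefs

/-!
Everything is governed by constant terms. An element of `S` with nonzero constant term is a
constant of `U(B) ∩ A`, so an `f ∈ R` with `f(0) ≠ 0` is `S`-primitive iff `f(0)` is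
`S₀`-primitive in `A`; through the constant embedding `A → R` and its retraction `f ↦ f(0)`
the splitting of `R` restricts to `A`.

If `S` splits `R`, no nonzero `S`-primitive `g` has `g(0) = 0`: writing `g = X p`, the
product `g² = X · (p g)` would be `S`-primitive and yet divisible by `X ∈ S`. Factoring `b X`
then forces `b ∈ U(B) A`, and comparing the two compact factorizations `(b t X) c = (t' X) c'`
of `a X`, where `a = b a'`, `a' = t c`, `a = t' c'`, forces `b t ∈ A`.

Conversely, writing `f = X^k q` with `q(0) = u a` produces compact factorizations. Two of
them, `s n = s' n'`, carry the same power of `X`, and their constants differ by `w ∈ U(B)` with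
`w n(0) = n'(0)`; condition (3) and uniqueness in `A` make `w` a unit of `A`.
-/

section Domain

variable {D : Type*} [CommRing D] [IsDomain D]

theorem assoc_iff_associated {a b : D} : Assoc a b ↔ Associated a b := by
  rw [← dvd_dvd_iff_associated]
  simp only [Assoc, SAssoc, Set.mem_univ, true_and, smul_eq_mul, Dvd.dvd, mul_comm]
  exact And.comm

theorem sPrimitive_nonZero_iff {m : D} (hm : m ≠ 0) :
    SPrimitive {x : D | x ≠ 0} m ↔ IsUnit m := by
  refine ⟨fun hp => ?_, fun hu s hs n hmn => ?_⟩
  · obtain ⟨⟨σ, -, h1⟩, -⟩ := hp m hm 1 (mul_one m).symm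
    exact .of_mul_eq_one σ (by rw [mul_comm, ← smul_eq_mul, ← h1])
  · rw [smul_eq_mul] at hmn
    have hsu : IsUnit s := isUnit_of_mul_isUnit_left (hmn ▸ hu)
    refine ⟨⟨↑hsu.unit⁻¹, Units.ne_zero _, ?_⟩, ⟨s, hs, hmn⟩⟩
    rw [hmn, smul_eq_mul, ← mul_assoc, hsu.val_inv_mul, one_mul]

theorem splits_nonZero : Splits {x : D | x ≠ 0} (Set.univ : Set D) := by
  have hprim : ∀ m : D, m ≠ 0 → SPrimitive {x : D | x ≠ 0} m → IsUnit m :=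
    fun m hm => (sPrimitive_nonZero_iff hm).1
  refine ⟨⟨fun m _ hm => ⟨m, 1, hm, (sPrimitive_nonZero_iff one_ne_zero).2 isUnit_one,
    (mul_one m).symm⟩, ?_⟩, ?_⟩
  · rintro m - hm s n s' n' ⟨-, hn, rfl⟩ ⟨-, hn', he⟩
    rw [smul_eq_mul] at hm he
    rw [assoc_iff_associated]
    have hu := hprim n (right_ne_zero_of_mul hm) hn
    have hu' := hprim n' (right_ne_zero_of_mul (he ▸ hm)) hn'
    exact (associated_mul_unit_left s n hu).symm.trans
      (he ▸ associated_mul_unit_left s' n' hu')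
  · intro r hr m hm hrm _
    rw [smul_eq_mul] at hrm ⊢
    exact (sPrimitive_nonZero_iff hrm).2 <|
      (hprim r (left_ne_zero_of_mul hrm) hr).mul (hprim m (right_ne_zero_of_mul hrm) hm)

end Domain

section

open Polynomial

theorem _root_.Polynomial.natTrailingDegree_X_pow_mul_of_coeff_zero_ne_zero {R : Type*} [Semiring R]
    {p : R[X]} (hp : p.coeff 0 ≠ 0) (k : ℕ) : (X ^ k * p).natTrailingDegree = k := by
  rw [(commute_X_pow p k).eq, natTrailingDegree_mul_X_pow (fun h => hp (by simp [h])),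
    natTrailingDegree_eq_zero_of_constantCoeff_ne_zero hp, zero_add]

theorem _root_.Polynomial.X_pow_mul_eq_X_pow_mul {R : Type*} [Semiring R] {k l : ℕ} {p q : R[X]}
    (hp : p.coeff 0 ≠ 0) (hq : q.coeff 0 ≠ 0) (h : X ^ k * p = X ^ l * q) : k = l ∧ p = q := by
  have hkl : k = l := by
    rw [← natTrailingDegree_X_pow_mul_of_coeff_zero_ne_zero hp k, h,
      natTrailingDegree_X_pow_mul_of_coeff_zero_ne_zero hq]
  subst hkl
  exact ⟨rfl, (isRegular_X_pow k).left h⟩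

namespace AXBX

section CommRing

variable {B : Type*} [CommRing B] {A : Subring B}

theorem mem_iff {p : B[X]} : p ∈ AXBX B A ↔ p.coeff 0 ∈ A := Iff.rfl

theorem C_mul_mem {b : B} {p : B[X]} (h : b * p.coeff 0 ∈ A) : C b * p ∈ AXBX B A := by
  rwa [mem_iff, coeff_C_mul]

theorem C_mul_X_pow_mem {c : B} {k : ℕ} (h : k = 0 → c ∈ A) : C c * X ^ k ∈ AXBX B A := by
  rw [mem_iff, coeff_C_mul, coeff_X_pow]
  split_ifs with hk
  · simpa using h hk.symm
  · simp

theorem mul_X_mem (p : B[X]) : p * X ∈ AXBX B A := by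
  simp [mem_iff]

theorem mk_C_mul_X_ne_zero {b : B} (hb : b ≠ 0) : (⟨C b * X, mul_X_mem _⟩ : AXBX B A) ≠ 0 :=
  fun h => hb (by simpa using congrArg (fun f : AXBX B A => (f : B[X]).coeff 1) h)

variable (A) in
noncomputable def const : A →+* AXBX B A :=
  (C.comp A.subtype).codRestrict (AXBX B A) fun a => by simp [mem_iff]

noncomputable def coeffZero : AXBX B A →+* A :=
  (constantCoeff.comp (AXBX B A).subtype).codRestrict A fun f => f.2

@[simp] theorem coe_const (a : A) : (const A a : B[X]) = C (a : B) := rfl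

@[simp] theorem coe_coeffZero (f : AXBX B A) : (coeffZero f : B) = (f : B[X]).coeff 0 := rfl

@[simp] theorem coeffZero_const (a : A) : coeffZero (const A a) = a :=
  Subtype.ext coeff_C_zero

@[simp] theorem coeffZero_eq_zero {f : AXBX B A} : coeffZero f = 0 ↔ (f : B[X]).coeff 0 = 0 := by
  simp [Subtype.ext_iff]

theorem const_injective : Function.Injective (const A) :=
  fun a b h => by simpa using congrArg coeffZero h

theorem mem_Sset_iff {s : AXBX B A} :
    s ∈ Sset B A ↔ ∃ c k, IsUnit c ∧ (k = 0 → c ∈ A) ∧ (s : B[X]) = C c * X ^ k := by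
  constructor
  · rintro (⟨c, hc, hcA, hs⟩ | ⟨c, hc, k, hk, hs⟩)
    · exact ⟨c, 0, hc, fun _ => hcA, by simpa using hs⟩
    · exact ⟨c, k, hc, by omega, hs⟩
  · rintro ⟨c, k, hc, hcA, hs⟩
    rcases Nat.eq_zero_or_pos k with rfl | hk
    · exact Or.inl ⟨c, hc, hcA rfl, by simpa using hs⟩
    · exact Or.inr ⟨c, hc, k, hk, hs⟩

theorem const_mem_Sset {a : A} (ha : a ∈ S0set B A) : const A a ∈ Sset B A :=
  Or.inl ⟨a, ha, a.2, rfl⟩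

theorem one_mem_Sset : (1 : AXBX B A) ∈ Sset B A :=
  map_one (const A) ▸ const_mem_Sset (by simp [S0set])

theorem mul_mem_Sset {s s' : AXBX B A} (hs : s ∈ Sset B A) (hs' : s' ∈ Sset B A) :
    s * s' ∈ Sset B A := by
  obtain ⟨c, k, hc, hcA, hsc⟩ := mem_Sset_iff.1 hs
  obtain ⟨c', k', hc', hcA', hsc'⟩ := mem_Sset_iff.1 hs'
  refine mem_Sset_iff.2 ⟨c * c', k + k', hc.mul hc', fun hk => ?_, ?_⟩
  · exact A.mul_mem (hcA (by omega)) (hcA' (by omega))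
  · rw [MulMemClass.coe_mul, hsc, hsc', C_mul, pow_add]
    ring

theorem eq_const_of_mem_Sset {s : AXBX B A} (hs : s ∈ Sset B A) (h0 : coeffZero s ≠ 0) :
    coeffZero s ∈ S0set B A ∧ s = const A (coeffZero s) := by
  rcases hs with ⟨c, hc, -, hsc⟩ | ⟨c, -, k, hk, hsc⟩
  · have hc0 : (coeffZero s : B) = c := by simp [hsc]
    exact ⟨by simpa [S0set, hc0] using hc, Subtype.ext (by simp [hsc, hc0])⟩
  · refine absurd (Subtype.ext ?_) h0
    simp [hsc, coeff_X_pow, show 0 ≠ k by omega]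

theorem exists_eq_const_mul {n : AXBX B A} {v a : A} (hv : v ∈ S0set B A)
    (h : coeffZero n = v * a) : ∃ m, n = const A v * m ∧ coeffZero m = a := by
  have h' : (n : B[X]).coeff 0 = v * a := by simpa using congrArg Subtype.val h
  obtain ⟨u, hu⟩ := hv
  have hm : (↑u⁻¹ : B) * (n : B[X]).coeff 0 = a := by
    rw [h', ← hu, ← mul_assoc, Units.inv_mul, one_mul]
  refine ⟨⟨C (↑u⁻¹ : B) * n, C_mul_mem (hm ▸ a.2)⟩, Subtype.ext ?_, Subtype.ext ?_⟩
  · simp [← mul_assoc, ← C_mul, ← hu]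
  · simpa using hm

end CommRing

section IsDomain

variable {B : Type*} [CommRing B] [IsDomain B] {A : Subring B}

theorem sPrimitive_iff {n : AXBX B A} (hn : coeffZero n ≠ 0) :
    SPrimitive (Sset B A) n ↔ SPrimitive (S0set B A) (coeffZero n) := by
  refine ⟨fun hp v hv a ha => ?_, fun hp s hs m hnm => ?_⟩
  · rw [smul_eq_mul] at ha
    obtain ⟨m, hnm, hma⟩ := exists_eq_const_mul hv ha
    obtain ⟨⟨σ, hσ, hmσ⟩, -⟩ := hp _ (const_mem_Sset hv) m hnm
    have haσ : a = coeffZero σ * coeffZero n := by rw [← hma, hmσ, smul_eq_mul, map_mul]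
    have hσ0 : coeffZero σ ≠ 0 := left_ne_zero_of_mul (haσ ▸ right_ne_zero_of_mul (ha ▸ hn))
    exact ⟨⟨coeffZero σ, (eq_const_of_mem_Sset hσ hσ0).1, haσ⟩, ⟨v, hv, ha⟩⟩
  · rw [smul_eq_mul] at hnm
    have hprod : coeffZero n = coeffZero s * coeffZero m := by rw [hnm, map_mul]
    obtain ⟨hsS0, hsc⟩ := eq_const_of_mem_Sset hs (left_ne_zero_of_mul (hprod ▸ hn))
    obtain ⟨⟨σ, hσ, hmσ⟩, -⟩ := hp _ hsS0 _ hprod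
    rw [smul_eq_mul] at hmσ
    have hσs : σ * coeffZero s = 1 :=
      mul_right_cancel₀ hn (by linear_combination -hprod - coeffZero s * hmσ)
    refine ⟨⟨const A σ, const_mem_Sset hσ, ?_⟩, ⟨s, hs, hnm⟩⟩
    rw [smul_eq_mul, hnm, hsc, ← mul_assoc, ← map_mul, hσs, map_one, one_mul]

theorem sPrimitive_const_iff {a : A} (ha : a ≠ 0) :
    SPrimitive (Sset B A) (const A a) ↔ SPrimitive (S0set B A) a := by
  rw [sPrimitive_iff (by rwa [coeffZero_const]), coeffZero_const]

theorem exists_mem_Sset_mul_coeffZero_ne_zero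
    (hB : ∀ b : B, ∃ u : B, IsUnit u ∧ ∃ a : A, b = u * a) {f : AXBX B A} (hf : f ≠ 0) :
    ∃ s ∈ Sset B A, ∃ n, f = s * n ∧ coeffZero n ≠ 0 := by
  obtain ⟨q, hfq, hq⟩ :=
    exists_eq_pow_rootMultiplicity_mul_and_not_dvd (f : B[X]) (by simpa using hf) 0
  rw [C_0, sub_zero] at hfq hq
  rw [X_dvd_iff] at hq
  set k := rootMultiplicity 0 (f : B[X])
  rcases Nat.eq_zero_or_pos k with hk | hk
  · refine ⟨1, one_mem_Sset, f, (one_mul f).symm, fun h => hq ?_⟩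
    simpa [hfq, hk] using congrArg Subtype.val h
  · obtain ⟨_, ⟨u, rfl⟩, a, hqa⟩ := hB (q.coeff 0)
    have hua : (↑u⁻¹ : B) * q.coeff 0 = a := by rw [hqa, ← mul_assoc, Units.inv_mul, one_mul]
    refine ⟨⟨C (u : B) * X ^ k, C_mul_X_pow_mem (by omega)⟩,
      mem_Sset_iff.2 ⟨u, k, u.isUnit, by omega, rfl⟩, ⟨C (↑u⁻¹ : B) * q, C_mul_mem (hua ▸ a.2)⟩,
      Subtype.ext ?_, fun h => hq ?_⟩
    · have hC : C (u : B) * C (↑u⁻¹ : B) = 1 := by rw [← C_mul, Units.mul_inv, C_1]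
      rw [MulMemClass.coe_mul, hfq]
      linear_combination -(X ^ k * q) * hC
    · simpa using congrArg Subtype.val h

theorem coeffZero_ne_zero_of_sPrimitive
    (hB : ∀ b : B, ∃ u : B, IsUnit u ∧ ∃ a : A, b = u * a) {g : AXBX B A}
    (hg : SPrimitive (Sset B A) g) (hg0 : g ≠ 0) : coeffZero g ≠ 0 := by
  obtain ⟨s, hs, n, hgn, hn⟩ := exists_mem_Sset_mul_coeffZero_ne_zero hB hg0
  obtain ⟨⟨σ, -, hnσ⟩, -⟩ := hg s hs n hgn
  intro h
  exact hn (by rw [hnσ, smul_eq_mul, map_mul, h, mul_zero])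

theorem coeffZero_ne_zero_of_splits (h : Splits (Sset B A) (Set.univ : Set (AXBX B A)))
    {g : AXBX B A} (hg : SPrimitive (Sset B A) g) (hg0 : g ≠ 0) : coeffZero g ≠ 0 := by
  intro h0
  have h0' : (g : B[X]).coeff 0 = 0 := coeffZero_eq_zero.1 h0
  obtain ⟨p, hgp⟩ := X_dvd_iff.2 h0'
  let x : AXBX B A := ⟨X, by simp [mem_iff]⟩
  have hx : x ∈ Sset B A := mem_Sset_iff.2 ⟨1, 1, isUnit_one, by omega, by simp [x]⟩
  let m : AXBX B A := ⟨p * g, by simp [mem_iff, mul_coeff_zero, h0']⟩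
  have hgg : g * g = x • m := Subtype.ext <| by
    show (g : B[X]) * (g : B[X]) = X * (p * (g : B[X]))
    rw [hgp]; ring
  obtain ⟨⟨σ, -, hmσ⟩, -⟩ :=
    h.2 g hg g hg (mul_ne_zero hg0 hg0) trivial x hx m hgg
  have hg0' : (g : B[X]) ≠ 0 := by simpa using hg0
  have hpg : p * g ≠ 0 := mul_ne_zero (right_ne_zero_of_mul (hgp ▸ hg0')) hg0'
  have e : p * g = σ * (g * g) := by simpa [m] using congrArg Subtype.val hmσ
  have hσX : 1 - (σ : B[X]) * X = 0 :=
    (mul_eq_zero.1 (by linear_combination e + (σ * g : B[X]) * hgp)).resolve_left hpg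
  simpa using congrArg (coeff · 0) hσX

theorem splits_S0set_of_splits (h : Splits (Sset B A) (Set.univ : Set (AXBX B A))) :
    Splits (S0set B A) (Set.univ : Set A) := by
  have hconst : ∀ {a t n : A}, a ≠ 0 → IsCompactFactorization (S0set B A) a t n →
      IsCompactFactorization (Sset B A) (const A a) (const A t) (const A n) :=
    fun ha ⟨ht, hn, hatn⟩ => ⟨const_mem_Sset ht,
      (sPrimitive_const_iff (right_ne_zero_of_mul (hatn ▸ ha))).2 hn,
      by rw [hatn]; exact map_mul ..⟩
  refine ⟨⟨fun a _ ha => ?_, fun a _ ha t n t' n' hf hf' => ?_⟩, fun r hr m hm hrm _ => ?_⟩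
  · obtain ⟨s, n, hs, hn, hasn⟩ :=
      h.1.1 _ trivial ((map_ne_zero_iff _ const_injective).2 ha)
    have hprod : a = coeffZero s * coeffZero n := by
      rw [← coeffZero_const a, hasn, smul_eq_mul, map_mul]
    have hn0 := right_ne_zero_of_mul (hprod ▸ ha)
    exact ⟨coeffZero s, coeffZero n, (eq_const_of_mem_Sset hs (left_ne_zero_of_mul (hprod ▸ ha))).1,
      (sPrimitive_iff hn0).1 hn, hprod⟩
  · have hst := h.1.2 _ trivial ((map_ne_zero_iff _ const_injective).2 ha) _ _ _ _
      (hconst ha hf) (hconst ha hf')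
    rw [assoc_iff_associated] at hst ⊢
    simpa using hst.map coeffZero
  · rw [smul_eq_mul] at hrm ⊢
    have hr0 := left_ne_zero_of_mul hrm
    have hm0 := right_ne_zero_of_mul hrm
    have hprim := h.2 _ ((sPrimitive_const_iff hr0).2 hr) _ ((sPrimitive_const_iff hm0).2 hm)
      (by rw [smul_eq_mul, ← map_mul]; exact (map_ne_zero_iff _ const_injective).2 hrm) trivial
    rwa [smul_eq_mul, ← map_mul, sPrimitive_const_iff hrm] at hprim

theorem exists_isUnit_mul_eq_of_splits (h : Splits (Sset B A) (Set.univ : Set (AXBX B A)))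
    (b : B) : ∃ u : B, IsUnit u ∧ ∃ a : A, b = u * a := by
  rcases eq_or_ne b 0 with rfl | hb
  · exact ⟨1, isUnit_one, 0, by simp⟩
  let F : AXBX B A := ⟨C b * X, mul_X_mem _⟩
  have hF : F ≠ 0 := mk_C_mul_X_ne_zero hb
  obtain ⟨s, g, hs, hg, hFsg⟩ := h.1.1 F trivial hF
  have hg0 := coeffZero_ne_zero_of_splits h hg (right_ne_zero_of_mul (hFsg ▸ hF))
  obtain ⟨c, k, hc, -, hsc⟩ := mem_Sset_iff.1 hs
  have hXk : X ^ 1 * C b = X ^ k * (C c * (g : B[X])) := by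
    have := congrArg Subtype.val hFsg
    simp only [smul_eq_mul, Subring.coe_mul, hsc, F] at this
    linear_combination this
  obtain ⟨-, hbg⟩ := X_pow_mul_eq_X_pow_mul (by simpa using hb)
    (by simpa [hc.ne_zero] using hg0) hXk
  exact ⟨c, hc, coeffZero g, by simpa using congrArg (coeff · 0) hbg⟩

theorem exists_mul_mem_of_splits (h : Splits (Sset B A) (Set.univ : Set (AXBX B A)))
    (b : B) (hb : IsUnit b) (hba : ∃ a a' : A, (a' : B) ≠ 0 ∧ b * a' = a) :
    ∃ a s : A, IsUnit (s : B) ∧ b * s = a := by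
  obtain ⟨a, a', ha', hba⟩ := hba
  have ha : (a : B) ≠ 0 := hba ▸ mul_ne_zero hb.ne_zero ha'
  have hA := splits_S0set_of_splits h
  have ha'0 : a' ≠ 0 := by simpa using ha'
  have ha0 : a ≠ 0 := by simpa using ha
  obtain ⟨t, c, ht, hc, htc⟩ := hA.1.1 a' trivial ha'0
  obtain ⟨t', c', ht', hc', htc'⟩ := hA.1.1 a trivial ha0
  rw [smul_eq_mul] at htc htc'
  let F : AXBX B A := ⟨C (a : B) * X, mul_X_mem _⟩
  have hfac : IsCompactFactorization (Sset B A) F ⟨C (b * t) * X, mul_X_mem _⟩ (const A c) := by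
    refine ⟨mem_Sset_iff.2 ⟨b * t, 1, hb.mul ht, by omega, by simp⟩,
      (sPrimitive_const_iff (right_ne_zero_of_mul (htc ▸ ha'0))).2 hc, Subtype.ext ?_⟩
    simp only [F, ← hba, htc, Subring.coe_mul, map_mul, smul_eq_mul, coe_const]
    ring
  have hfac' : IsCompactFactorization (Sset B A) F ⟨C (t' : B) * X, mul_X_mem _⟩ (const A c') := by
    refine ⟨mem_Sset_iff.2 ⟨t', 1, ht', by omega, by simp⟩,
      (sPrimitive_const_iff (right_ne_zero_of_mul (htc' ▸ ha0))).2 hc', Subtype.ext ?_⟩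
    simp only [F, htc', Subring.coe_mul, map_mul, smul_eq_mul, coe_const]
    ring
  obtain ⟨⟨r, -, hr⟩, -⟩ := h.1.2 F trivial (mk_C_mul_X_ne_zero ha) _ _ _ _ hfac hfac'
  have hbt := congrArg (fun f : AXBX B A => (f : B[X]).coeff 1) hr
  simp only [smul_eq_mul, MulMemClass.coe_mul, ← mul_assoc, coeff_mul_X,
    mul_coeff_zero, coeff_C_zero] at hbt
  exact ⟨coeffZero r * t', t, ht, by simpa using hbt⟩

theorem exists_units_eq_of_splits_S0set (h1 : Splits (S0set B A) (Set.univ : Set A))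
    (h3 : ∀ b : B, IsUnit b → (∃ a a' : A, (a' : B) ≠ 0 ∧ b * a' = a) →
      ∃ a s : A, IsUnit (s : B) ∧ b * s = a)
    {w : B} (hw : IsUnit w) {a a' : A} (ha : SPrimitive (S0set B A) a)
    (ha' : SPrimitive (S0set B A) a') (ha0 : a ≠ 0) (hwa : w * a = a') :
    ∃ x : Aˣ, ((x : A) : B) = w := by
  obtain ⟨a'', t, ht, hwt⟩ := h3 w hw ⟨a', a, by simpa using ha0, hwa⟩
  have ht0 : (t : B) ≠ 0 := ht.ne_zero
  have ha'0 : (a' : B) ≠ 0 := hwa ▸ mul_ne_zero hw.ne_zero (by simpa using ha0)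
  have hfac : IsCompactFactorization (S0set B A) (t * a') t a' := ⟨ht, ha', rfl⟩
  have hfac' : IsCompactFactorization (S0set B A) (t * a') a'' a := by
    refine ⟨show IsUnit (a'' : B) from hwt ▸ hw.mul ht, ha, Subtype.ext ?_⟩
    simp only [smul_eq_mul, MulMemClass.coe_mul, ← hwt, ← hwa]
    ring
  obtain ⟨x, hx⟩ := assoc_iff_associated.1 <|
    h1.1.2 _ trivial (mul_ne_zero (by simpa using ht0) (by simpa using ha'0)) _ _ _ _ hfac hfac'
  refine ⟨x, mul_left_cancel₀ ht0 ?_⟩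
  rw [← MulMemClass.coe_mul, hx, ← hwt, mul_comm]

theorem splits_of_splits_S0set (h1 : Splits (S0set B A) (Set.univ : Set A))
    (h2 : ∀ b : B, ∃ u : B, IsUnit u ∧ ∃ a : A, b = u * a)
    (h3 : ∀ b : B, IsUnit b → (∃ a a' : A, (a' : B) ≠ 0 ∧ b * a' = a) →
      ∃ a s : A, IsUnit (s : B) ∧ b * s = a) :
    Splits (Sset B A) (Set.univ : Set (AXBX B A)) := by
  refine ⟨⟨fun f _ hf => ?_, fun f _ hf s n s' n' ⟨hs, hn, hfsn⟩ ⟨hs', hn', hfsn'⟩ => ?_⟩,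
    fun r hr m hm hrm _ => ?_⟩
  · obtain ⟨s, hs, n, hfsn, hn0⟩ := exists_mem_Sset_mul_coeffZero_ne_zero h2 hf
    obtain ⟨t, c, ht, hc, hntc⟩ := h1.1.1 _ trivial hn0
    obtain ⟨m, hnm, hmc⟩ := exists_eq_const_mul ht hntc
    have hm0 : coeffZero m ≠ 0 := hmc ▸ right_ne_zero_of_mul (hntc ▸ hn0)
    refine ⟨s * const A t, m, mul_mem_Sset hs (const_mem_Sset ht),
      (sPrimitive_iff hm0).2 (hmc ▸ hc), ?_⟩
    rw [smul_eq_mul, hfsn, hnm, mul_assoc]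
  · rw [smul_eq_mul] at hfsn hfsn'
    have hn0 := coeffZero_ne_zero_of_sPrimitive h2 hn (right_ne_zero_of_mul (hfsn ▸ hf))
    have hn'0 := coeffZero_ne_zero_of_sPrimitive h2 hn' (right_ne_zero_of_mul (hfsn' ▸ hf))
    obtain ⟨c, k, hc, -, hsc⟩ := mem_Sset_iff.1 hs
    obtain ⟨c', k', ⟨u', rfl⟩, -, hsc'⟩ := mem_Sset_iff.1 hs'
    have hXk : X ^ k * (C c * (n : B[X])) = X ^ k' * (C (u' : B) * (n' : B[X])) := by
      have := congrArg Subtype.val (hfsn.symm.trans hfsn')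
      simp only [MulMemClass.coe_mul, hsc, hsc'] at this
      linear_combination this
    obtain ⟨rfl, hcn⟩ := X_pow_mul_eq_X_pow_mul (by simpa [hc.ne_zero] using hn0)
      (by simpa using hn'0) hXk
    have hcn0 : (↑u'⁻¹ * c) * coeffZero n = coeffZero n' := by
      have := congrArg (coeff · 0) hcn
      simp only [mul_coeff_zero, coeff_C_zero] at this
      rw [coe_coeffZero, coe_coeffZero, mul_assoc, this, Units.inv_mul_cancel_left]
    obtain ⟨x, hx⟩ := exists_units_eq_of_splits_S0set h1 h3 (u'⁻¹.isUnit.mul hc)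
      ((sPrimitive_iff hn0).1 hn) ((sPrimitive_iff hn'0).1 hn') hn0 hcn0
    rw [assoc_iff_associated]
    refine Associated.symm ⟨Units.map (const A : A →* AXBX B A) x, Subtype.ext ?_⟩
    simp only [Units.coe_map, MonoidHom.coe_coe, MulMemClass.coe_mul, coe_const, hx, hsc, hsc']
    rw [mul_right_comm, ← C_mul, Units.mul_inv_cancel_left]
  · rw [smul_eq_mul] at hrm ⊢
    have hr0 := coeffZero_ne_zero_of_sPrimitive h2 hr (left_ne_zero_of_mul hrm)
    have hm0 := coeffZero_ne_zero_of_sPrimitive h2 hm (right_ne_zero_of_mul hrm)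
    rw [sPrimitive_iff (by rw [map_mul]; exact mul_ne_zero hr0 hm0), map_mul]
    exact h1.2 _ ((sPrimitive_iff hr0).1 hr) _ ((sPrimitive_iff hm0).1 hm)
      (mul_ne_zero hr0 hm0) trivial

theorem splits_of_isField (hB : IsField B) : Splits (Sset B A) (Set.univ : Set (AXBX B A)) := by
  have hunit : ∀ x : B, x ≠ 0 → IsUnit x := fun x hx =>
    let ⟨y, hy⟩ := hB.mul_inv_cancel hx
    .of_mul_eq_one y hy
  have hS0 : S0set B A = {a : A | a ≠ 0} := by
    ext a
    show IsUnit (a : B) ↔ a ≠ 0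
    exact ⟨fun h => by simpa using h.ne_zero, fun h => hunit _ (by simpa using h)⟩
  refine splits_of_splits_S0set (hS0 ▸ splits_nonZero) (fun b => ?_)
    fun b _ ⟨a, a', ha', hba⟩ => ⟨a, a', hunit _ ha', hba⟩
  rcases eq_or_ne b 0 with rfl | hb
  · exact ⟨1, isUnit_one, 0, by simp⟩
  · exact ⟨b, hunit b hb, 1, by simp⟩

theorem splits_of_splits_S0set_of_forall_mul_mem (h1 : Splits (S0set B A) (Set.univ : Set A))
    (h23 : ∀ b : B, ∃ a s : A, IsUnit (s : B) ∧ b * s = a) :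
    Splits (Sset B A) (Set.univ : Set (AXBX B A)) := by
  refine splits_of_splits_S0set h1 (fun b => ?_) fun b _ _ => h23 b
  obtain ⟨a, s, ⟨u, hu⟩, hbs⟩ := h23 b
  exact ⟨↑u⁻¹, u⁻¹.isUnit, a, by rw [← hbs, ← hu, mul_comm, Units.mul_inv_cancel_right]⟩

end IsDomain

end AXBX

end

theorem statement16 (B : Type*) [CommRing B] [IsDomain B] (A : Subring B) :
    (Splits (Sset B A) (Set.univ : Set (AXBX B A)) ↔
      (Splits (S0set B A) (Set.univ : Set A) ∧
       (∀ b : B, ∃ u : B, IsUnit u ∧ ∃ a : A, b = u * a) ∧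
       (∀ b : B, IsUnit b → (∃ a a' : A, (a' : B) ≠ 0 ∧ b * a' = a) →
          ∃ a s : A, IsUnit (s : B) ∧ b * s = a))) ∧
    (IsField B → Splits (Sset B A) (Set.univ : Set (AXBX B A))) ∧
    ((Splits (S0set B A) (Set.univ : Set A) ∧
        ∀ b : B, ∃ a s : A, IsUnit (s : B) ∧ b * s = a) →
      Splits (Sset B A) (Set.univ : Set (AXBX B A))) :=
  ⟨⟨fun h => ⟨AXBX.splits_S0set_of_splits h, AXBX.exists_isUnit_mul_eq_of_splits h,
      AXBX.exists_mul_mem_of_splits h⟩,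
    fun ⟨h1, h2, h3⟩ => AXBX.splits_of_splits_S0set h1 h2 h3⟩,
    AXBX.splits_of_isField, fun ⟨h1, h23⟩ => AXBX.splits_of_splits_S0set_of_forall_mul_mem h1 h23⟩

end FactorizationPaper
end

section
/- Let B be an integral domain. Then the polynomial ring B[X] is atomic (respectively, a BFD, an FFD, an HFD, a UFD) if and only if the Laurent polynomial ring B[X, X^{-1}] is atomic (respectively, a BFD, an FFD, an HFD, a UFD). -/
namespace FactorizationPaper

variable {R : Type*} [CommRing R]

/-!
The argument works for any domain `R`, any prime `p` of `R` of finite multiplicity in every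
nonzero element, and `L = R[1/p]`; for `B[X]` take `p = X`.

In the monoid of associates a factorization up to order and associates is a multiset of
irreducibles with the right product. Every nonzero class of `R` is uniquely `pᵐ * g` with
`p ∤ g`, and the factorizations of `pᵐ * g` are those of `g` plus `m` copies of `p`. On
`p`-free classes the map to the associates of `L` is injective, hits every nonzero class and
preserves irreducibility, so it identifies the factorizations of `g` in `R` with those of its
image in `L`. Being nonempty, finite, a singleton or of constant length survives both
identifications. For factorizations into arbitrary nonunits the first one fails, because a
nonunit `pᵏ * u` of `R` becomes a unit of `L`; instead, such a factorization of `pᵐ * g` has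
at most `m` more factors than one of `g`.
-/

def _root_.Associates.map {M N : Type*} [CommMonoid M] [CommMonoid N] (f : M →* N) :
    Associates M →* Associates N where
  toFun := Quotient.lift (fun a => Associates.mk (f a))
    fun _ _ h => Associates.mk_eq_mk_iff_associated.2 (h.map f)
  map_one' := by
    rw [← Associates.mk_one]
    exact Associates.mk_eq_one.2 (by rw [map_one]; exact isUnit_one)
  map_mul' := by
    rintro ⟨a⟩ ⟨b⟩
    exact Associates.mk_eq_mk_iff_associated.2 (by rw [map_mul])

@[simp]
theorem _root_.Associates.map_mk {M N : Type*} [CommMonoid M] [CommMonoid N] (f : M →* N)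
    (a : M) : Associates.map f (Associates.mk a) = Associates.mk (f a) :=
  rfl

theorem forall_finiteMultiplicity_associates {M : Type*} [CommMonoidWithZero M] {p : M}
    (hfin : ∀ x : M, x ≠ 0 → FiniteMultiplicity p x) (A : Associates M) (hA : A ≠ 0) :
    FiniteMultiplicity (Associates.mk p) A := by
  obtain ⟨x, rfl⟩ := Associates.mk_surjective A
  obtain ⟨n, hn⟩ := hfin x (Associates.mk_ne_zero.1 hA)
  exact ⟨n, by rwa [← Associates.mk_pow, Associates.mk_dvd_mk]⟩

section Factorizations

variable {M : Type*} [CommMonoid M]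

def factorizations (Q : M → Prop) (a : M) : Set (Multiset M) :=
  {s | (∀ b ∈ s, Q b) ∧ s.prod = a}

theorem zero_mem_factorizations_one (Q : M → Prop) : 0 ∈ factorizations Q 1 :=
  ⟨fun _ h => absurd h (Multiset.notMem_zero _), Multiset.prod_zero⟩

theorem factorizations_one {Q : M → Prop} (hQ : ∀ b, Q b → ¬IsUnit b) :
    factorizations Q 1 = {0} := by
  refine Set.eq_singleton_iff_unique_mem.2 ⟨zero_mem_factorizations_one Q, ?_⟩
  rintro s ⟨hs, hprod⟩
  by_contra hs0
  obtain ⟨b, hb⟩ := Multiset.exists_mem_of_ne_zero hs0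
  exact hQ b (hs b hb) (isUnit_of_dvd_one (hprod ▸ Multiset.dvd_prod hb))

theorem not_dvd_of_mem_factorizations {Q : M → Prop} {P a b : M} {s : Multiset M}
    (hs : s ∈ factorizations Q a) (ha : ¬P ∣ a) (hb : b ∈ s) : ¬P ∣ b :=
  fun h => ha (hs.2 ▸ h.trans (Multiset.dvd_prod hb))

end Factorizations

section PrimePowers

variable {M : Type*} [CommMonoidWithZero M] [IsCancelMulZero M] {P : M}

theorem _root_.Prime.eq_of_pow_mul_eq_pow_mul (hP : Prime P) {a b : M} {k m : ℕ} (ha : ¬P ∣ a)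
    (hb : ¬P ∣ b) (h : P ^ k * a = P ^ m * b) : k = m ∧ a = b := by
  wlog hkm : k ≤ m generalizing k m a b
  · obtain ⟨h₁, h₂⟩ := this hb ha h.symm (le_of_not_ge hkm)
    exact ⟨h₁.symm, h₂.symm⟩
  obtain ⟨d, rfl⟩ := Nat.exists_eq_add_of_le hkm
  rw [pow_add, mul_assoc] at h
  have had : a = P ^ d * b := mul_left_cancel₀ (pow_ne_zero k hP.ne_zero) h
  cases d with
  | zero => simpa using had
  | succ d => exact absurd (had ▸ dvd_mul_of_dvd_left (dvd_pow_self P d.succ_ne_zero) b) ha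

variable [Subsingleton Mˣ]

theorem factorizations_irreducible_pow_mul (hP : Prime P) {G : M} (hG : ¬P ∣ G) (m : ℕ) :
    factorizations Irreducible (P ^ m * G) =
      (Multiset.replicate m P + ·) '' factorizations Irreducible G := by
  classical
  ext s
  constructor
  · rintro ⟨hirr, hprod⟩
    set r := s.filter (· ≠ P)
    have hr : ¬P ∣ r.prod := fun hdvd => by
      obtain ⟨a, ha, hPa⟩ := hP.exists_mem_multiset_dvd hdvd
      rw [Multiset.mem_filter] at ha
      exact ha.2 (associated_iff_eq.1 (hP.irreducible.associated_of_dvd (hirr a ha.1) hPa)).symm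
    have hsplit : Multiset.replicate (s.count P) P + r = s := by
      rw [← Multiset.filter_eq']
      exact Multiset.filter_add_not _ s
    obtain ⟨hcount, hrG⟩ := hP.eq_of_pow_mul_eq_pow_mul hr hG (by
      rw [← hprod, ← Multiset.prod_replicate, ← Multiset.prod_add, hsplit])
    refine ⟨r, ⟨fun a ha => hirr a (Multiset.mem_of_mem_filter ha), hrG⟩, ?_⟩
    rw [← hcount]
    exact hsplit
  · rintro ⟨r, ⟨hirr, hprod⟩, rfl⟩
    refine ⟨fun a ha => ?_, by rw [Multiset.prod_add, Multiset.prod_replicate, hprod]⟩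
    rcases Multiset.mem_add.1 ha with ha | ha
    · exact Multiset.eq_of_mem_replicate ha ▸ hP.irreducible
    · exact hirr a ha

theorem exists_card_le_of_mem_factorizations_pow_mul (hP : Prime P)
    (hfin : ∀ a : M, a ≠ 0 → FiniteMultiplicity P a) (s : Multiset M) :
    ∀ {m : ℕ} {G : M}, ¬P ∣ G → s ∈ factorizations (¬IsUnit ·) (P ^ m * G) →
      ∃ s' ∈ factorizations (¬IsUnit ·) G, s.card ≤ m + s'.card := by
  induction s using Multiset.induction_on with
  | empty =>
    rintro m G - ⟨-, hprod⟩
    have hG : G = 1 := isUnit_iff_eq_one.1 <| isUnit_of_mul_isUnit_right (x := P ^ m) <| by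
      rw [← hprod, Multiset.prod_zero]
      exact isUnit_one
    exact ⟨0, hG ▸ zero_mem_factorizations_one _, by simp⟩
  | cons a s ih =>
    rintro m G hG ⟨hnu, hprod⟩
    rw [Multiset.prod_cons] at hprod
    have hG0 : P ^ m * G ≠ 0 :=
      mul_ne_zero (pow_ne_zero m hP.ne_zero) (by rintro rfl; exact hG (dvd_zero P))
    obtain ⟨ha0, hs0⟩ := mul_ne_zero_iff.1 (hprod ▸ hG0)
    obtain ⟨A, hA, hAP⟩ := (hfin a ha0).exists_eq_pow_mul_and_not_dvd
    obtain ⟨C, hC, hCP⟩ := (hfin _ hs0).exists_eq_pow_mul_and_not_dvd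
    generalize multiplicity P a = i at hA
    generalize multiplicity P s.prod = j at hC
    have hAC : ¬P ∣ A * C := fun h => (hP.dvd_mul.1 h).elim hAP hCP
    obtain ⟨hijm, hACG⟩ := hP.eq_of_pow_mul_eq_pow_mul (k := i + j) hAC hG (by
      rw [← hprod, hA, hC, pow_add, mul_mul_mul_comm])
    obtain ⟨s', hs', hcard⟩ := ih hCP ⟨fun b hb => hnu b (Multiset.mem_cons_of_mem hb), hC⟩
    -- a factor `pⁱ * A` with `A` a unit accounts for `i ≥ 1` of the `m` copies of `p`
    by_cases hA1 : IsUnit A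
    · rw [isUnit_iff_eq_one] at hA1
      subst hA1
      have hi : i ≠ 0 := fun hi => hnu a (Multiset.mem_cons_self a s) (by simp [hA, hi])
      refine ⟨s', by rw [one_mul] at hACG; exact hACG ▸ hs', ?_⟩
      rw [Multiset.card_cons]
      omega
    · refine ⟨A ::ₘ s', ⟨?_, by rw [Multiset.prod_cons, hs'.2, hACG]⟩, ?_⟩
      · intro b hb
        rcases Multiset.mem_cons.1 hb with rfl | hb
        exacts [hA1, hs'.1 b hb]
      · rw [Multiset.card_cons, Multiset.card_cons]
        omega

theorem bddAbove_card_factorizations_pow_mul_iff (hP : Prime P)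
    (hfin : ∀ a : M, a ≠ 0 → FiniteMultiplicity P a) {G : M} (hG : ¬P ∣ G) (m : ℕ) :
    BddAbove (Multiset.card '' factorizations (¬IsUnit ·) (P ^ m * G)) ↔
      BddAbove (Multiset.card '' factorizations (¬IsUnit ·) G) := by
  constructor
  · rintro ⟨n, hn⟩
    refine ⟨n, ?_⟩
    rintro _ ⟨s, ⟨hnu, hprod⟩, rfl⟩
    have hmem : Multiset.replicate m P + s ∈ factorizations (¬IsUnit ·) (P ^ m * G) := by
      refine ⟨fun b hb => ?_, by rw [Multiset.prod_add, Multiset.prod_replicate, hprod]⟩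
      rcases Multiset.mem_add.1 hb with hb | hb
      exacts [Multiset.eq_of_mem_replicate hb ▸ hP.not_isUnit, hnu b hb]
    have := hn ⟨_, hmem, rfl⟩
    rw [Multiset.card_add] at this
    omega
  · rintro ⟨n, hn⟩
    refine ⟨m + n, ?_⟩
    rintro _ ⟨s, hs, rfl⟩
    obtain ⟨s', hs', hcard⟩ := exists_card_le_of_mem_factorizations_pow_mul hP hfin s hG hs
    have := hn ⟨s', hs', rfl⟩
    omega

end PrimePowers

section DomainConditions

variable {D : Type*} [CommRing D]

theorem listAssociated_iff {l l' : List D} :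
    ListAssociated D l l' ↔
      (l : Multiset D).map Associates.mk = (l' : Multiset D).map Associates.mk := by
  have hforall₂ : ∀ l'' : List D,
      List.Forall₂ Associated l l'' ↔ l.map Associates.mk = l''.map Associates.mk := by
    intro l''
    rw [← List.forall₂_eq_eq_eq, List.forall₂_map_left_iff, List.forall₂_map_right_iff]
    simp only [Associates.mk_eq_mk_iff_associated]
  simp only [Multiset.map_coe, Multiset.coe_eq_coe]
  rw [← congrFun₂ (List.eq_map_comp_perm Associates.mk)]
  exact exists_congr fun l'' => by rw [hforall₂, List.perm_comm, and_comm]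

variable {Q : Associates D → Prop} {Q' : D → Prop}

theorem map_mk_mem_factorizations (hQ : ∀ a, Q (Associates.mk a) ↔ Q' a) {x : D} {l : List D}
    (hl : ∀ a ∈ l, Q' a) (hx : x = l.prod) :
    (l : Multiset D).map Associates.mk ∈ factorizations Q (Associates.mk x) := by
  refine ⟨fun b hb => ?_, by rw [Associates.prod_mk, Multiset.prod_coe, hx]⟩
  obtain ⟨a, ha, rfl⟩ := Multiset.mem_map.1 hb
  exact (hQ a).2 (hl a ha)

theorem exists_list_of_mem_factorizations (hQ : ∀ a, Q (Associates.mk a) ↔ Q' a) {x : D}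
    (hx : ¬IsUnit x) {s : Multiset (Associates D)}
    (hs : s ∈ factorizations Q (Associates.mk x)) :
    ∃ l : List D, (∀ a ∈ l, Q' a) ∧ x = l.prod ∧
      (l : Multiset D).map Associates.mk = s := by
  obtain ⟨t, rfl⟩ := Multiset.map_surjective_of_surjective Associates.mk_surjective s
  obtain ⟨l₀, rfl⟩ : ∃ l₀ : List D, (l₀ : Multiset D) = t :=
    ⟨t.toList, t.coe_toList⟩
  obtain ⟨u, hu⟩ : Associated l₀.prod x := by
    rw [← Associates.mk_eq_mk_iff_associated, ← Multiset.prod_coe, ← Associates.prod_mk, hs.2]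
  cases l₀ with
  | nil => exact absurd (hu ▸ by simp) hx
  | cons a r =>
    have hl : ((a * u :: r : List D) : Multiset D).map Associates.mk =
        ((a :: r : List D) : Multiset D).map Associates.mk := by
      simp [Associates.mk_eq_mk_iff_associated.2 (associated_mul_unit_left a u u.isUnit)]
    refine ⟨a * u :: r, fun b hb => (hQ b).1 (hs.1 _ ?_), ?_, hl⟩
    · rw [← hl]; exact Multiset.mem_map_of_mem _ hb
    · rw [← hu, List.prod_cons, List.prod_cons]; ring

theorem forall_associates_ne_zero_iff {P : Associates D → Prop} (h1 : P 1) :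
    (∀ A : Associates D, A ≠ 0 → P A) ↔
      ∀ x : D, x ≠ 0 → ¬IsUnit x → P (Associates.mk x) := by
  refine ⟨fun h x hx _ => h _ (Associates.mk_ne_zero.2 hx), fun h A hA => ?_⟩
  obtain ⟨x, rfl⟩ := Associates.mk_surjective A
  by_cases hx : IsUnit x
  · rwa [Associates.mk_eq_one.2 hx]
  · exact h x (Associates.mk_ne_zero.1 hA) hx

theorem domAtomic_iff :
    DomAtomic D ↔ ∀ A : Associates D, A ≠ 0 → (factorizations Irreducible A).Nonempty := by
  have hQ := fun a : D => Associates.irreducible_mk (a := a)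
  rw [forall_associates_ne_zero_iff ⟨0, zero_mem_factorizations_one _⟩]
  refine forall₃_congr fun x _ hx => ⟨fun ⟨l, hl, hxl⟩ => ?_, fun ⟨s, hs⟩ => ?_⟩
  · exact ⟨_, map_mk_mem_factorizations hQ hl hxl⟩
  · obtain ⟨l, hl, hxl, -⟩ := exists_list_of_mem_factorizations hQ hx hs
    exact ⟨l, hl, hxl⟩

theorem domBFD_iff : DomBFD D ↔ ∀ A : Associates D, A ≠ 0 →
    BddAbove (Multiset.card '' factorizations (¬IsUnit ·) A) := by
  have hQ := fun a : D => (Associates.isUnit_mk (a := a)).not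
  rw [forall_associates_ne_zero_iff (by rw [factorizations_one fun _ => id]; simp)]
  refine forall₃_congr fun x _ hx =>
    ⟨fun ⟨n, hn⟩ => ⟨n, ?_⟩, fun ⟨n, hn⟩ => ⟨n, ?_⟩⟩
  · rintro _ ⟨s, hs, rfl⟩
    obtain ⟨l, hl, hxl, rfl⟩ := exists_list_of_mem_factorizations hQ hx hs
    simpa using hn l hl hxl
  · intro l hl hxl
    simpa using hn ⟨_, map_mk_mem_factorizations hQ hl hxl, rfl⟩

theorem domHFD_iff : DomHFD D ↔ DomAtomic D ∧ ∀ A : Associates D, A ≠ 0 →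
    (Multiset.card '' factorizations Irreducible A).Subsingleton := by
  have hQ := fun a : D => Associates.irreducible_mk (a := a)
  rw [forall_associates_ne_zero_iff (by simp [factorizations_one fun _ => Irreducible.not_isUnit])]
  refine and_congr_right fun _ => forall₃_congr fun x _ hx => ⟨fun h => ?_, fun h => ?_⟩
  · rintro _ ⟨s, hs, rfl⟩ _ ⟨t, ht, rfl⟩
    obtain ⟨l, hl, hxl, rfl⟩ := exists_list_of_mem_factorizations hQ hx hs
    obtain ⟨l', hl', hxl', rfl⟩ := exists_list_of_mem_factorizations hQ hx ht
    simpa using h l l' hl hxl hl' hxl'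
  · intro l l' hl hxl hl' hxl'
    simpa using h ⟨_, map_mk_mem_factorizations hQ hl hxl, rfl⟩
      ⟨_, map_mk_mem_factorizations hQ hl' hxl', rfl⟩

theorem domUFD_iff : DomUFD D ↔ DomAtomic D ∧ ∀ A : Associates D, A ≠ 0 →
    (factorizations Irreducible A).Subsingleton := by
  have hQ := fun a : D => Associates.irreducible_mk (a := a)
  rw [forall_associates_ne_zero_iff (by simp [factorizations_one fun _ => Irreducible.not_isUnit])]
  refine and_congr_right fun _ => forall₃_congr fun x _ hx => ⟨fun h => ?_, fun h => ?_⟩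
  · intro s hs t ht
    obtain ⟨l, hl, hxl, rfl⟩ := exists_list_of_mem_factorizations hQ hx hs
    obtain ⟨l', hl', hxl', rfl⟩ := exists_list_of_mem_factorizations hQ hx ht
    exact listAssociated_iff.1 (h l l' hl hxl hl' hxl')
  · intro l l' hl hxl hl' hxl'
    exact listAssociated_iff.2
      (h (map_mk_mem_factorizations hQ hl hxl) (map_mk_mem_factorizations hQ hl' hxl'))

theorem domFFD_iff : DomFFD D ↔ DomAtomic D ∧ ∀ A : Associates D, A ≠ 0 →
    (factorizations Irreducible A).Finite := by
  have hQ := fun a : D => Associates.irreducible_mk (a := a)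
  rw [forall_associates_ne_zero_iff (by simp [factorizations_one fun _ => Irreducible.not_isUnit])]
  refine and_congr_right fun _ => forall₃_congr fun x _ hx =>
    ⟨fun ⟨Fs, hFs, h⟩ => ?_, fun h => ?_⟩
  · refine (hFs.image fun l : List D => (l : Multiset D).map Associates.mk).subset fun s hs => ?_
    obtain ⟨l, hl, hxl, rfl⟩ := exists_list_of_mem_factorizations hQ hx hs
    obtain ⟨l', hl'Fs, hll'⟩ := h l hl hxl
    exact ⟨l', hl'Fs, (listAssociated_iff.1 hll').symm⟩
  · have hlift := Multiset.map_surjective_of_surjective (Associates.mk_surjective (M := D))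
    refine ⟨(fun s => (Function.surjInv hlift s).toList) ''
      factorizations Irreducible (Associates.mk x), h.image _, fun l hl hxl => ?_⟩
    refine ⟨_, Set.mem_image_of_mem _ (map_mk_mem_factorizations hQ hl hxl),
      listAssociated_iff.2 ?_⟩
    rw [Multiset.coe_toList, Function.surjInv_eq hlift]

end DomainConditions

namespace Away

variable {R : Type*} [CommRing R] {p : R}
  {L : Type*} [CommRing L] [Algebra R L] [IsLocalization.Away p L]

local notation "Φ" => Associates.map (algebraMap R L : R →* L)

theorem exists_associated_algebraMap (hfin : ∀ x : R, x ≠ 0 → FiniteMultiplicity p x)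
    {y : L} (hy : y ≠ 0) : ∃ g : R, ¬p ∣ g ∧ Associated (algebraMap R L g) y := by
  obtain ⟨n, a, ha⟩ := IsLocalization.Away.surj p y
  have hpu : IsUnit (algebraMap R L p) := IsLocalization.Away.algebraMap_isUnit p
  have ha0 : a ≠ 0 := by
    rintro rfl
    rw [map_zero] at ha
    exact hy ((hpu.pow n).mul_left_eq_zero.1 ha)
  obtain ⟨g, hag, hg⟩ := (hfin a ha0).exists_eq_pow_mul_and_not_dvd
  refine ⟨g, hg, ?_⟩
  have hga : Associated (algebraMap R L g) (algebraMap R L a) := by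
    rw [hag, map_mul, mul_comm, map_pow]
    exact (associated_mul_unit_left _ _ (hpu.pow _)).symm
  exact hga.trans (ha ▸ associated_mul_unit_left y _ (hpu.pow n))

theorem exists_map_eq (hfin : ∀ x : R, x ≠ 0 → FiniteMultiplicity p x) {B : Associates L}
    (hB : B ≠ 0) : ∃ G, ¬Associates.mk p ∣ G ∧ Φ G = B := by
  obtain ⟨y, rfl⟩ := Associates.mk_surjective B
  obtain ⟨g, hg, hgy⟩ := exists_associated_algebraMap hfin (Associates.mk_ne_zero.1 hB)
  exact ⟨Associates.mk g, by rwa [Associates.mk_dvd_mk],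
    Associates.mk_eq_mk_iff_associated.2 hgy⟩

variable [IsDomain R]

theorem algebraMap_injective (hp : Prime p) : Function.Injective (algebraMap R L) :=
  IsLocalization.injective L (powers_le_nonZeroDivisors_of_noZeroDivisors hp.ne_zero)

theorem algebraMap_dvd_algebraMap_iff (hp : Prime p) {g h : R} (hg : ¬p ∣ g) :
    algebraMap R L g ∣ algebraMap R L h ↔ g ∣ h := by
  refine ⟨fun ⟨y, hy⟩ => ?_, map_dvd _⟩
  obtain ⟨n, c, hc⟩ := IsLocalization.Away.surj p y
  -- `h * pⁿ = g * c` with `p ∤ g` forces `pⁿ ∣ c`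
  have hpc : h * p ^ n = g * c := algebraMap_injective (L := L) hp (by
    rw [map_mul, map_mul, map_pow, hy, mul_assoc, hc])
  obtain ⟨c', rfl⟩ := hp.pow_dvd_of_dvd_mul_left n hg ⟨h, by rw [← hpc, mul_comm]⟩
  exact ⟨c', mul_right_cancel₀ (pow_ne_zero n hp.ne_zero) (by rw [hpc]; ring)⟩

theorem map_dvd_map_iff (hp : Prime p) {G H : Associates R} (hG : ¬Associates.mk p ∣ G) :
    Φ G ∣ Φ H ↔ G ∣ H := by
  obtain ⟨g, rfl⟩ := Associates.mk_surjective G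
  obtain ⟨h, rfl⟩ := Associates.mk_surjective H
  rw [Associates.mk_dvd_mk] at hG
  simp only [Associates.map_mk, Associates.mk_dvd_mk, MonoidHom.coe_coe]
  exact algebraMap_dvd_algebraMap_iff hp hG

theorem map_injOn (hp : Prime p) : Set.InjOn Φ {G | ¬Associates.mk p ∣ G} :=
  fun _ hG _ hH h =>
    dvd_antisymm ((map_dvd_map_iff hp hG).1 h.dvd) ((map_dvd_map_iff hp hH).1 h.symm.dvd)

theorem map_ne_zero (hp : Prime p) {G : Associates R} (hG : G ≠ 0) : Φ G ≠ 0 := by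
  obtain ⟨g, rfl⟩ := Associates.mk_surjective G
  rw [Associates.map_mk, Associates.mk_ne_zero] at *
  exact (map_ne_zero_iff _ (algebraMap_injective hp)).2 hG

theorem isUnit_map_iff (hp : Prime p) {G : Associates R} (hG : ¬Associates.mk p ∣ G) :
    IsUnit (Φ G) ↔ IsUnit G := by
  have h1 : ¬Associates.mk p ∣ 1 := (Associates.prime_mk.2 hp).not_dvd_one
  rw [isUnit_iff_eq_one, isUnit_iff_eq_one, ← map_one Φ]
  exact (map_injOn hp).eq_iff hG h1

theorem irreducible_map_iff (hp : Prime p) (hfin : ∀ x : R, x ≠ 0 → FiniteMultiplicity p x)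
    {G : Associates R} (hG : ¬Associates.mk p ∣ G) : Irreducible (Φ G) ↔ Irreducible G := by
  have hP := Associates.prime_mk.2 hp
  have hG0 : G ≠ 0 := by rintro rfl; exact hG (dvd_zero _)
  refine ⟨fun h => ⟨fun hu => h.not_isUnit ((isUnit_map_iff hp hG).2 hu), fun A C hAC => ?_⟩,
    fun h => ⟨fun hu => h.not_isUnit ((isUnit_map_iff hp hG).1 hu), fun Y Z hYZ => ?_⟩⟩
  · have hA : ¬Associates.mk p ∣ A := fun hd => hG (hAC ▸ dvd_mul_of_dvd_left hd C)
    have hC : ¬Associates.mk p ∣ C := fun hd => hG (hAC ▸ dvd_mul_of_dvd_right hd A)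
    rw [← isUnit_map_iff (L := L) hp hA, ← isUnit_map_iff (L := L) hp hC]
    exact h.isUnit_or_isUnit (by rw [hAC, map_mul])
  · have hYZ0 := hYZ ▸ map_ne_zero hp hG0
    obtain ⟨A, hA, rfl⟩ := exists_map_eq (L := L) hfin (left_ne_zero_of_mul hYZ0)
    obtain ⟨C, hC, rfl⟩ := exists_map_eq (L := L) hfin (right_ne_zero_of_mul hYZ0)
    have hAC : ¬Associates.mk p ∣ A * C := fun hd => (hP.dvd_mul.1 hd).elim hA hC
    rw [isUnit_map_iff hp hA, isUnit_map_iff hp hC]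
    exact h.isUnit_or_isUnit ((map_injOn hp) hG hAC (by rw [hYZ, map_mul]))

theorem factorizations_map (hp : Prime p) (hfin : ∀ x : R, x ≠ 0 → FiniteMultiplicity p x)
    {QR : Associates R → Prop} {QL : Associates L → Prop}
    (hQ : ∀ G, ¬Associates.mk p ∣ G → (QL (Φ G) ↔ QR G))
    {G : Associates R} (hG : ¬Associates.mk p ∣ G) :
    factorizations QL (Φ G) = Multiset.map Φ '' factorizations QR G := by
  have hG0 : G ≠ 0 := by rintro rfl; exact hG (dvd_zero _)
  ext t
  constructor
  · rintro ⟨hQt, hprod⟩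
    have hlift : ∀ b ∈ t, ∃ a, ¬Associates.mk p ∣ a ∧ Φ a = b := fun b hb =>
      exists_map_eq hfin fun hb0 =>
        map_ne_zero hp hG0 (hprod ▸ Multiset.prod_eq_zero (hb0 ▸ hb))
    choose! ψ hψ using hlift
    have hmap : (t.map ψ).map Φ = t := by
      rw [Multiset.map_map]
      exact (Multiset.map_congr rfl fun b hb => (hψ b hb).2).trans (Multiset.map_id t)
    have hfree : ¬Associates.mk p ∣ (t.map ψ).prod := fun hd => by
      obtain ⟨a, ha, hpa⟩ := (Associates.prime_mk.2 hp).exists_mem_multiset_dvd hd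
      obtain ⟨b, hb, rfl⟩ := Multiset.mem_map.1 ha
      exact (hψ b hb).1 hpa
    refine ⟨t.map ψ, ⟨fun a ha => ?_, map_injOn (L := L) hp hfree hG ?_⟩, hmap⟩
    · obtain ⟨b, hb, rfl⟩ := Multiset.mem_map.1 ha
      exact (hQ _ (hψ b hb).1).1 (by rw [(hψ b hb).2]; exact hQt b hb)
    · rw [map_multiset_prod, hmap, hprod]
  · rintro ⟨s, hs, rfl⟩
    refine ⟨fun b hb => ?_, by rw [← map_multiset_prod, hs.2]⟩
    obtain ⟨a, ha, rfl⟩ := Multiset.mem_map.1 hb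
    exact (hQ a (not_dvd_of_mem_factorizations hs hG ha)).2 (hs.1 a ha)

theorem factorizations_irreducible_map (hp : Prime p)
    (hfin : ∀ x : R, x ≠ 0 → FiniteMultiplicity p x) {G : Associates R}
    (hG : ¬Associates.mk p ∣ G) :
    factorizations Irreducible (Φ G) = Multiset.map Φ '' factorizations Irreducible G :=
  factorizations_map hp hfin (fun _ => irreducible_map_iff hp hfin) hG

theorem injOn_multiset_map (hp : Prime p) {Q : Associates R → Prop} {G : Associates R}
    (hG : ¬Associates.mk p ∣ G) : Set.InjOn (Multiset.map Φ) (factorizations Q G) := by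
  have hinv := (map_injOn (L := L) hp).leftInvOn_invFunOn
  refine Set.LeftInvOn.injOn
    (f₁' := Multiset.map (Function.invFunOn Φ {G | ¬Associates.mk p ∣ G})) fun s hs => ?_
  rw [Multiset.map_map]
  exact (Multiset.map_congr rfl fun a ha => hinv (not_dvd_of_mem_factorizations hs hG ha)).trans
    (Multiset.map_id s)

theorem forall_ne_zero_iff (hp : Prime p) (hfin : ∀ x : R, x ≠ 0 → FiniteMultiplicity p x)
    (PR : Associates R → Prop) (PL : Associates L → Prop)
    (hR : ∀ m G, ¬Associates.mk p ∣ G → (PR (Associates.mk p ^ m * G) ↔ PR G))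
    (hL : ∀ G, ¬Associates.mk p ∣ G → (PL (Φ G) ↔ PR G)) :
    (∀ A : Associates R, A ≠ 0 → PR A) ↔ ∀ B : Associates L, B ≠ 0 → PL B := by
  have hG0 : ∀ {G : Associates R}, ¬Associates.mk p ∣ G → G ≠ 0 := by
    rintro G hG rfl; exact hG (dvd_zero _)
  refine ⟨fun h B hB => ?_, fun h A hA => ?_⟩
  · obtain ⟨G, hG, rfl⟩ := exists_map_eq hfin hB
    exact (hL G hG).2 (h G (hG0 hG))
  · obtain ⟨G, hAG, hG⟩ :=
      (forall_finiteMultiplicity_associates hfin A hA).exists_eq_pow_mul_and_not_dvd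
    rw [hAG, hR _ G hG, ← hL G hG]
    exact h _ (map_ne_zero hp (hG0 hG))

end Away

section

variable {R : Type*} [CommRing R] [IsDomain R] {p : R}
  {L : Type*} [CommRing L] [Algebra R L] [IsLocalization.Away p L]

theorem domAtomic_iff_away (hp : Prime p) (hfin : ∀ x : R, x ≠ 0 → FiniteMultiplicity p x) :
    DomAtomic R ↔ DomAtomic L := by
  rw [domAtomic_iff, domAtomic_iff]
  refine Away.forall_ne_zero_iff hp hfin _ _ (fun m G hG => ?_) (fun G hG => ?_)
  · rw [factorizations_irreducible_pow_mul (Associates.prime_mk.2 hp) hG, Set.image_nonempty]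
  · rw [Away.factorizations_irreducible_map hp hfin hG, Set.image_nonempty]

theorem domBFD_iff_away (hp : Prime p) (hfin : ∀ x : R, x ≠ 0 → FiniteMultiplicity p x) :
    DomBFD R ↔ DomBFD L := by
  rw [domBFD_iff, domBFD_iff]
  refine Away.forall_ne_zero_iff hp hfin _ _ (fun m G hG => ?_) (fun G hG => ?_)
  · exact bddAbove_card_factorizations_pow_mul_iff (Associates.prime_mk.2 hp)
      (forall_finiteMultiplicity_associates hfin) hG m
  · rw [Away.factorizations_map hp hfin (fun _ hG => (Away.isUnit_map_iff hp hG).not) hG,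
      Set.image_image]
    simp only [Multiset.card_map]

theorem domHFD_iff_away (hp : Prime p) (hfin : ∀ x : R, x ≠ 0 → FiniteMultiplicity p x) :
    DomHFD R ↔ DomHFD L := by
  rw [domHFD_iff, domHFD_iff]
  refine and_congr (domAtomic_iff_away hp hfin)
    (Away.forall_ne_zero_iff hp hfin _ _ (fun m G hG => ?_) (fun G hG => ?_))
  · rw [factorizations_irreducible_pow_mul (Associates.prime_mk.2 hp) hG, Set.image_image]
    simp only [Multiset.card_add, Multiset.card_replicate]
    rw [← Set.image_image (m + ·)]
    exact (add_right_injective m).subsingleton_image_iff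
  · rw [Away.factorizations_irreducible_map hp hfin hG, Set.image_image]
    simp only [Multiset.card_map]

theorem domUFD_iff_away (hp : Prime p) (hfin : ∀ x : R, x ≠ 0 → FiniteMultiplicity p x) :
    DomUFD R ↔ DomUFD L := by
  rw [domUFD_iff, domUFD_iff]
  refine and_congr (domAtomic_iff_away hp hfin)
    (Away.forall_ne_zero_iff hp hfin _ _ (fun m G hG => ?_) (fun G hG => ?_))
  · rw [factorizations_irreducible_pow_mul (Associates.prime_mk.2 hp) hG]
    exact (add_right_injective _).subsingleton_image_iff
  · rw [Away.factorizations_irreducible_map hp hfin hG]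
    exact ⟨fun h s hs t ht =>
      Away.injOn_multiset_map hp hG hs ht (h ⟨s, hs, rfl⟩ ⟨t, ht, rfl⟩),
      fun h => h.image _⟩

theorem domFFD_iff_away (hp : Prime p) (hfin : ∀ x : R, x ≠ 0 → FiniteMultiplicity p x) :
    DomFFD R ↔ DomFFD L := by
  rw [domFFD_iff, domFFD_iff]
  refine and_congr (domAtomic_iff_away hp hfin)
    (Away.forall_ne_zero_iff hp hfin _ _ (fun m G hG => ?_) (fun G hG => ?_))
  · rw [factorizations_irreducible_pow_mul (Associates.prime_mk.2 hp) hG]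
    exact Set.finite_image_iff (add_right_injective _).injOn
  · rw [Away.factorizations_irreducible_map hp hfin hG]
    exact Set.finite_image_iff (Away.injOn_multiset_map hp hG)

end

theorem statement17 (B : Type*) [CommRing B] [IsDomain B] :
    (DomAtomic (Polynomial B) ↔
      DomAtomic (Localization (Submonoid.powers (Polynomial.X : Polynomial B)))) ∧
    (DomBFD (Polynomial B) ↔
      DomBFD (Localization (Submonoid.powers (Polynomial.X : Polynomial B)))) ∧
    (DomFFD (Polynomial B) ↔
      DomFFD (Localization (Submonoid.powers (Polynomial.X : Polynomial B)))) ∧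
    (DomHFD (Polynomial B) ↔
      DomHFD (Localization (Submonoid.powers (Polynomial.X : Polynomial B)))) ∧
    (DomUFD (Polynomial B) ↔
      DomUFD (Localization (Submonoid.powers (Polynomial.X : Polynomial B)))) := by
  have hX : Prime (Polynomial.X : Polynomial B) := Polynomial.prime_X
  have hfin (f : Polynomial B) (hf : f ≠ 0) : FiniteMultiplicity Polynomial.X f := by
    simpa using Polynomial.finiteMultiplicity_X_sub_C (0 : B) hf
  exact ⟨domAtomic_iff_away hX hfin, domBFD_iff_away hX hfin, domFFD_iff_away hX hfin,
    domHFD_iff_away hX hfin, domUFD_iff_away hX hfin⟩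

end FactorizationPaper
end
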